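/- arXiv:0910.0692 — 2 statements merged into one kernel-verified Lean document; each statement's English description precedes it below -/
import Mathlib

section
/- Let κ, τ : ℝ → ℝ be smooth with κ > 0 everywhere. The system −3κκ' = 0, κ'' − κ³ − κτ² = −κτ, 2κ'τ + κτ' = κ' holds if and only if κ ≡ κ_0 and τ ≡ τ_0 are constants with κ_0² = τ_0(1 − τ_0) and κ_0 ≠ 0. -/
/-- For smooth `κ, τ : ℝ → ℝ` with `κ > 0` everywhere, the system
`−3κκ' = 0`, `κ'' − κ³ − κτ² = −κτ`, `2κ'τ + κτ' = κ'` holds iff `κ ≡ κ₀` and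
`τ ≡ τ₀` are constants with `κ₀² = τ₀(1 − τ₀)` and `κ₀ ≠ 0`. -/
theorem scalar_system_iff_constant_helix_data
    (κ τ : ℝ → ℝ) (hκ : ContDiff ℝ (⊤ : ℕ∞) κ) (hτ : ContDiff ℝ (⊤ : ℕ∞) τ)
    (hκpos : ∀ t, 0 < κ t) :
    (∀ t, -(3 * κ t * deriv κ t) = 0 ∧
      iteratedDeriv 2 κ t - κ t ^ 3 - κ t * τ t ^ 2 = -(κ t * τ t) ∧
      2 * deriv κ t * τ t + κ t * deriv τ t = deriv κ t) ↔
    (∃ κ₀ τ₀ : ℝ, κ₀ ≠ 0 ∧ κ₀ ^ 2 = τ₀ * (1 - τ₀) ∧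
      ∀ t, κ t = κ₀ ∧ τ t = τ₀) := by
  constructor
  · intro h
    have hdκ : ∀ t, deriv κ t = 0 := by
      intro t
      have h1 : 3 * κ t * deriv κ t = 0 := by linarith [(h t).1]
      have h3κ : (3 : ℝ) * κ t ≠ 0 := by have := hκpos t; positivity
      exact (mul_eq_zero.mp h1).resolve_left h3κ
    have hκdiff : Differentiable ℝ κ := hκ.differentiable (by simp)
    have hτdiff : Differentiable ℝ τ := hτ.differentiable (by simp)
    have hκconst : ∀ t, κ t = κ 0 := by
      intro t
      exact is_const_of_deriv_eq_zero hκdiff hdκ t 0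
    have hdτ : ∀ t, deriv τ t = 0 := by
      intro t
      have h3 := (h t).2.2
      have h1 := hdκ t
      have : κ t ≠ 0 := (hκpos t).ne'
      rw [h1] at h3
      have h4 : κ t * deriv τ t = 0 := by linarith
      exact (mul_eq_zero.mp h4).resolve_left this
    have hτconst : ∀ t, τ t = τ 0 := by
      intro t
      exact is_const_of_deriv_eq_zero hτdiff hdτ t 0
    have hκeq : κ = fun _ => κ 0 := funext hκconst
    have h2deriv : iteratedDeriv 2 κ 0 = 0 := by
      rw [hκeq]
      simp [iteratedDeriv_succ, iteratedDeriv_zero]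
    refine ⟨κ 0, τ 0, (hκpos 0).ne', ?_, fun t => ⟨hκconst t, hτconst t⟩⟩
    have h2 := (h 0).2.1
    rw [h2deriv] at h2
    have : κ 0 ≠ 0 := (hκpos 0).ne'
    have h5 : κ 0 * (κ 0 ^ 2 + τ 0 ^ 2 - τ 0) = 0 := by linear_combination -h2
    have h6 := (mul_eq_zero.mp h5).resolve_left this
    linear_combination h6
  · rintro ⟨κ₀, τ₀, hκ₀, heq, hconst⟩
    have hκeq : κ = fun _ => κ₀ := funext fun t => (hconst t).1
    have hτeq : τ = fun _ => τ₀ := funext fun t => (hconst t).2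
    subst hκeq hτeq
    intro t
    refine ⟨by simp, ?_, by simp⟩
    simp only [iteratedDeriv_succ, iteratedDeriv_zero]
    simp
    linear_combination (-κ₀) * heq
end

section
/- Let y : ℝ → ℝ³ be defined by y(s) = x'(s) where x(s) = (a cos(s/√(a²+1)), a sin(s/√(a²+1)), s/√(a²+1)) for some a > 0. Then y satisfies the ODE y''' = y × y'', where × denotes the cross product in ℝ³. -/
open Real

private lemma deriv_vec3 (f0 f1 f2 g0 g1 g2 : ℝ → ℝ)
    (h0 : ∀ s, HasDerivAt f0 (g0 s) s) (h1 : ∀ s, HasDerivAt f1 (g1 s) s)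
    (h2 : ∀ s, HasDerivAt f2 (g2 s) s) :
    deriv (fun s => ![f0 s, f1 s, f2 s]) = fun s => ![g0 s, g1 s, g2 s] := by
  funext s
  have h : HasDerivAt (fun s => ![f0 s, f1 s, f2 s]) ![g0 s, g1 s, g2 s] s := by
    rw [hasDerivAt_pi]
    intro i
    fin_cases i
    · simpa using h0 s
    · simpa using h1 s
    · simpa using h2 s
  exact h.deriv

/-- The unit tangent `y = x'` of the helix
`x(s) = (a cos(s/√(a²+1)), a sin(s/√(a²+1)), s/√(a²+1))` (with `a > 0`)
satisfies the biharmonic-curve ODE `y''' = y × y''`. -/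
theorem helix_tangent_satisfies_cross_ode (a : ℝ) (ha : 0 < a)
    (x : ℝ → (Fin 3 → ℝ))
    (hx : x = fun s => ![a * cos (s / sqrt (a ^ 2 + 1)),
                         a * sin (s / sqrt (a ^ 2 + 1)),
                         s / sqrt (a ^ 2 + 1)])
    (y : ℝ → (Fin 3 → ℝ)) (hy : y = deriv x) :
    ∀ s, iteratedDeriv 3 y s = crossProduct (y s) (iteratedDeriv 2 y s) := by
  set c : ℝ := (sqrt (a ^ 2 + 1))⁻¹ with hcdef
  have hx' : x = fun s => ![a * cos (s * c), a * sin (s * c), s * c] := by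
    rw [hx]; funext s; simp [div_eq_mul_inv, hcdef]
  have hlin : ∀ s : ℝ, HasDerivAt (fun s : ℝ => s * c) c s := fun s =>
    hasDerivAt_mul_const c
  have hcos : ∀ s : ℝ, HasDerivAt (fun s => a * cos (s * c)) (-(a * c) * sin (s * c)) s := by
    intro s
    have := ((hlin s).cos).const_mul a
    exact this.congr_deriv (by ring)
  have hsin : ∀ s : ℝ, HasDerivAt (fun s => a * sin (s * c)) ((a * c) * cos (s * c)) s := by
    intro s
    have := ((hlin s).sin).const_mul a
    exact this.congr_deriv (by ring)
  have hy1 : y = fun s => ![-(a * c) * sin (s * c), (a * c) * cos (s * c), c] := by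
    rw [hy, hx']
    exact deriv_vec3 _ _ _ _ _ _ hcos hsin (by simpa using hlin)
  have hcos2 : ∀ s : ℝ, HasDerivAt (fun s => -(a * c) * sin (s * c))
      (-(a * c * c) * cos (s * c)) s := by
    intro s
    have := ((hlin s).sin).const_mul (-(a * c))
    exact this.congr_deriv (by ring)
  have hsin2 : ∀ s : ℝ, HasDerivAt (fun s => (a * c) * cos (s * c))
      (-(a * c * c) * sin (s * c)) s := by
    intro s
    have := ((hlin s).cos).const_mul (a * c)
    exact this.congr_deriv (by ring)
  have hy2 : deriv y = fun s => ![-(a * c * c) * cos (s * c), -(a * c * c) * sin (s * c), 0] := by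
    rw [hy1]
    exact deriv_vec3 _ _ _ _ _ _ hcos2 hsin2 (fun s => hasDerivAt_const s c)
  have hcos3 : ∀ s : ℝ, HasDerivAt (fun s => -(a * c * c) * cos (s * c))
      ((a * c * c * c) * sin (s * c)) s := by
    intro s
    have := ((hlin s).cos).const_mul (-(a * c * c))
    exact this.congr_deriv (by ring)
  have hsin3 : ∀ s : ℝ, HasDerivAt (fun s => -(a * c * c) * sin (s * c))
      (-(a * c * c * c) * cos (s * c)) s := by
    intro s
    have := ((hlin s).sin).const_mul (-(a * c * c))
    exact this.congr_deriv (by ring)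
  have hy3 : deriv (deriv y) =
      fun s => ![(a * c * c * c) * sin (s * c), -(a * c * c * c) * cos (s * c), 0] := by
    rw [hy2]
    exact deriv_vec3 _ _ _ _ _ _ hcos3 hsin3 (fun s => hasDerivAt_const s (0:ℝ))
  have hcos4 : ∀ s : ℝ, HasDerivAt (fun s => (a * c * c * c) * sin (s * c))
      ((a * c * c * c * c) * cos (s * c)) s := by
    intro s
    have := ((hlin s).sin).const_mul (a * c * c * c)
    exact this.congr_deriv (by ring)
  have hsin4 : ∀ s : ℝ, HasDerivAt (fun s => -(a * c * c * c) * cos (s * c))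
      ((a * c * c * c * c) * sin (s * c)) s := by
    intro s
    have := ((hlin s).cos).const_mul (-(a * c * c * c))
    exact this.congr_deriv (by ring)
  have hy4 : deriv (deriv (deriv y)) =
      fun s => ![(a * c * c * c * c) * cos (s * c), (a * c * c * c * c) * sin (s * c), 0] := by
    rw [hy3]
    exact deriv_vec3 _ _ _ _ _ _ hcos4 hsin4 (fun s => hasDerivAt_const s (0:ℝ))
  intro s
  have e3 : iteratedDeriv 3 y = deriv (deriv (deriv y)) := by
    simp [iteratedDeriv_succ, iteratedDeriv_zero]
  have e2 : iteratedDeriv 2 y = deriv (deriv y) := by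
    simp [iteratedDeriv_succ, iteratedDeriv_zero]
  rw [e3, e2, hy4, hy3, hy1]
  funext i
  fin_cases i <;> simp [cross_apply] <;> ring
end
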